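/- If for some x the limit m(x) of the median sequence of the M&m sequence started from (0,x,1) exists and the sequence stabilizes at value m(x), then there is an index 4 ≤ l < L(x) with x_l = m(x); that is, the eventual constant value of an M&m sequence must already appear earlier in the sequence. -/

import Mathlib

open Finset Filter

/-- The median of a finite list of reals: the middle element of the sorted list
if the length is odd, and the average of the two middle elements if it is even. -/
noncomputable def med (l : List ℝ) : ℝ :=
  let s := l.insertionSort (· ≤ ·)
  if l.length % 2 = 1 then s.getD (l.length / 2) 0
  else (s.getD (l.length / 2 - 1) 0 + s.getD (l.length / 2) 0) / 2

/-- The list of the first `n` terms `X 1, …, X n`. -/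
def firstTerms (X : ℕ → ℝ) (n : ℕ) : List ℝ := (List.range' 1 n).map X

/-- The median `m_n` of the first `n` terms. -/
noncomputable def medn (X : ℕ → ℝ) (n : ℕ) : ℝ := med (firstTerms X n)

/-- `X` is the M&m sequence generated from the starting triple `(a, b, c)`:
`x_n = n · med(x_1,…,x_{n-1}) − (x_1 + ⋯ + x_{n-1})` for `n ≥ 4`. -/
def IsMnM (a b c : ℝ) (X : ℕ → ℝ) : Prop :=
  X 1 = a ∧ X 2 = b ∧ X 3 = c ∧
  ∀ n, 4 ≤ n → X n = n * medn X (n - 1) - ∑ j ∈ Finset.Icc 1 (n - 1), X j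

/-! Write `S n = X 1 + ⋯ + X n`. The recursion says exactly that `S (n + 1) = (n + 1) * medn X n`
for `n ≥ 3`. Once `X n = M` for all `n ≥ L`, this gives `(n + 1) * (medn X n - M) = S L - L * M`
for every `n ≥ L`; since each median is the midpoint of two of the finitely many values
`X 1, …, X L`, the medians repeat, and so `S L = L * M`. Running the identity backwards gives
`medn X (L - 1) = medn X (L - 2) = M`. Appending `X (L - 1) ≠ M` to `X 1, …, X (L - 2)` leaves the
median at `M`, which forces `M` to occur twice among `X 1, …, X (L - 2)`; as `0, x, 1` are
distinct, one occurrence is some `X l` with `4 ≤ l`. -/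

theorem List.exists_orderedInsert_eq_insertIdx {α : Type*} (r : α → α → Prop) [DecidableRel r]
    (y : α) : ∀ s : List α, ∃ k ≤ s.length, s.orderedInsert r y = s.insertIdx k y
  | [] => ⟨0, le_rfl, rfl⟩
  | a :: s => by
    by_cases hya : r y a
    · exact ⟨0, Nat.zero_le _, List.orderedInsert_cons_of_le _ _ hya⟩
    · obtain ⟨k, hk, h⟩ := List.exists_orderedInsert_eq_insertIdx r y s
      exact ⟨k + 1, by simpa using hk, by rw [List.orderedInsert_of_not_le _ _ hya, h]; rfl⟩

theorem List.two_le_count_of_getElem_eq {α : Type*} [DecidableEq α] {l : List α} {a : α} (i : ℕ)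
    (hi : i + 1 < l.length) (h₀ : l[i] = a) (h₁ : l[i + 1] = a) : 2 ≤ l.count a := by
  have hdrop : l.drop i = a :: a :: l.drop (i + 2) := by
    rw [List.drop_eq_getElem_cons (by omega), List.drop_eq_getElem_cons hi, h₀, h₁]
  have hsub : List.Sublist [a, a] l :=
    (hdrop ▸ (List.cons_sublist_cons.2 (List.cons_sublist_cons.2 (List.nil_sublist _)))).trans
      (List.drop_sublist i l)
  exact List.duplicate_iff_two_le_count.1 (List.duplicate_iff_sublist.2 hsub)

theorem List.insertionSort_eq_of_perm {α : Type*} [LinearOrder α] {l₁ l₂ : List α}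
    (h : l₁.Perm l₂) :
    l₁.insertionSort (· ≤ ·) = l₂.insertionSort (· ≤ ·) :=
  ((List.perm_insertionSort _ _).trans (h.trans (List.perm_insertionSort _ _).symm)).eq_of_sortedLE
    List.sortedLE_insertionSort List.sortedLE_insertionSort

theorem med_of_length_eq_odd {l : List ℝ} {m : ℕ} (h : l.length = 2 * m + 1) :
    med l = (l.insertionSort (· ≤ ·))[m]'(by rw [List.length_insertionSort]; omega) := by
  have hm : l.length / 2 = m := by omega
  rw [med, if_pos (by omega), hm, List.getD_eq_getElem]

theorem med_of_length_eq_even {l : List ℝ} {m : ℕ} (h : l.length = 2 * m + 2) :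
    med l = ((l.insertionSort (· ≤ ·))[m]'(by rw [List.length_insertionSort]; omega) +
      (l.insertionSort (· ≤ ·))[m + 1]'(by rw [List.length_insertionSort]; omega)) / 2 := by
  have hm : l.length / 2 = m + 1 := by omega
  rw [med, if_neg (by omega), hm, Nat.add_sub_cancel, List.getD_eq_getElem, List.getD_eq_getElem]

theorem two_le_count_of_med_append_eq {A : List ℝ} {y M : ℝ} (hA : med A = M)
    (hAy : med (A ++ [y]) = M) (hy : y ≠ M) : 2 ≤ A.count M := by
  set s := A.insertionSort (· ≤ ·)
  obtain ⟨k, hk, hsort⟩ : ∃ k ≤ s.length, (A ++ [y]).insertionSort (· ≤ ·) = s.insertIdx k y := by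
    rw [List.insertionSort_eq_of_perm (List.perm_append_singleton y A)]
    exact List.exists_orderedInsert_eq_insertIdx (α := ℝ) (· ≤ ·) y s
  suffices ∃ i, ∃ hi : i + 1 < s.length, s[i] = M ∧ s[i + 1] = M by
    obtain ⟨i, hi, h₀, h₁⟩ := this
    rw [← (List.perm_insertionSort (· ≤ ·) A).count_eq]
    exact List.two_le_count_of_getElem_eq i hi h₀ h₁
  -- In each parity, `grind` splits on the position `k` of `y` against the middle index;
  -- `y ≠ M` excludes the positions where `y` would be a middle entry.
  obtain ⟨n, hn | hn⟩ := Nat.even_or_odd' A.length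
  · rcases n with _ | m
    · rw [List.length_eq_zero_iff.1 hn] at hAy
      exact (hy (by simpa [med] using hAy)).elim
    · rw [med_of_length_eq_even (by omega : A.length = 2 * m + 2)] at hA
      rw [med_of_length_eq_odd (m := m + 1) (by simp; omega)] at hAy
      simp only [hsort] at hAy
      grind
  · rw [med_of_length_eq_odd hn] at hA
    rw [med_of_length_eq_even (m := n) (by simp; omega)] at hAy
    simp only [hsort] at hAy
    grind

theorem exists_med_eq_midpoint {l : List ℝ} (hl : l ≠ []) :
    ∃ a ∈ l, ∃ b ∈ l, med l = (a + b) / 2 := by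
  have hmem : ∀ i (hi : i < (l.insertionSort (· ≤ ·)).length), (l.insertionSort (· ≤ ·))[i] ∈ l :=
    fun i hi => (List.perm_insertionSort _ l).subset (List.getElem_mem hi)
  obtain ⟨n, hn | hn⟩ := Nat.even_or_odd' l.length
  · rcases n with _ | m
    · exact absurd (List.length_eq_zero_iff.1 hn) hl
    · exact ⟨_, hmem m _, _, hmem (m + 1) _, med_of_length_eq_even (by omega)⟩
  · exact ⟨_, hmem n _, _, hmem n _, by rw [med_of_length_eq_odd hn]; ring⟩

theorem firstTerms_succ (X : ℕ → ℝ) (n : ℕ) :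
    firstTerms X (n + 1) = firstTerms X n ++ [X (n + 1)] := by
  simp [firstTerms, List.range'_concat, add_comm]

theorem finite_range_medn_of_eventually_const {X : ℕ → ℝ} {L : ℕ}
    (hX : ∀ n, L ≤ n → X n = X L) : (Set.range (medn X)).Finite := by
  set V := X '' Set.Iic L
  have hV : V.Finite := (Set.finite_Iic L).image X
  refine ((hV.image2 (fun a b => (a + b) / 2) hV).insert 0).subset ?_
  rintro _ ⟨n, rfl⟩
  rcases n.eq_zero_or_pos with rfl | hn
  · left
    simp [medn, firstTerms, med]
  · right
    have hsub : ∀ z ∈ firstTerms X n, z ∈ V := by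
      simp only [firstTerms, List.mem_map, List.mem_range'_1]
      rintro _ ⟨j, -, rfl⟩
      rcases le_total j L with hj | hj
      · exact ⟨j, hj, rfl⟩
      · exact ⟨L, Set.mem_Iic.2 le_rfl, (hX j hj).symm⟩
    obtain ⟨a, ha, b, hb, hab⟩ := exists_med_eq_midpoint (l := firstTerms X n)
      (List.ne_nil_of_length_pos (by simpa [firstTerms] using hn))
    exact ⟨a, hsub a ha, b, hsub b hb, hab.symm⟩

theorem apply_pred_ne_of_isLeast {α : Type*} {X : ℕ → α} {L : ℕ}
    (hL : IsLeast {k | ∀ n, k < n → X n = X k} L) (hL0 : L ≠ 0) : X (L - 1) ≠ X L := by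
  intro heq
  have hmem : L - 1 ∈ {k | ∀ n, k < n → X n = X k} := by
    intro n hn
    rcases (show L ≤ n by omega).eq_or_lt with rfl | hlt
    · exact heq.symm
    · exact (hL.1 n hlt).trans heq.symm
  have := hL.2 hmem
  omega

namespace IsMnM

variable {a b c : ℝ} {X : ℕ → ℝ}

theorem sum_Icc_succ (h : IsMnM a b c X) {n : ℕ} (hn : 3 ≤ n) :
    ∑ j ∈ Icc 1 (n + 1), X j = (n + 1) * medn X n := by
  rw [Finset.sum_Icc_succ_top (by omega), h.2.2.2 (n + 1) (by omega), Nat.add_sub_cancel]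
  push_cast
  ring

theorem medn_eq_of_sum_Icc_succ (h : IsMnM a b c X) {n : ℕ} (hn : 3 ≤ n) {M : ℝ}
    (hS : ∑ j ∈ Icc 1 (n + 1), X j = (n + 1) * M) : medn X n = M := by
  rw [h.sum_Icc_succ hn] at hS
  exact mul_left_cancel₀ (by positivity) hS

theorem sum_Icc_eq_mul_of_eventually_const (h : IsMnM a b c X) {L : ℕ} (hL : 3 ≤ L)
    (hX : ∀ n, L ≤ n → X n = X L) : ∑ j ∈ Icc 1 L, X j = L * X L := by
  have hS : ∀ d : ℕ, ∑ j ∈ Icc 1 (L + d), X j = ∑ j ∈ Icc 1 L, X j + d * X L := by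
    intro d
    induction d with
    | zero => simp
    | succ d ih =>
      rw [← add_assoc, Finset.sum_Icc_succ_top (by omega), ih, hX (L + d + 1) (by omega)]
      push_cast
      ring
  have hmed : ∀ d : ℕ, ((L + d + 1 : ℕ) : ℝ) * (medn X (L + d) - X L) =
      ∑ j ∈ Icc 1 L, X j - L * X L := by
    intro d
    have := h.sum_Icc_succ (n := L + d) (by omega)
    rw [add_assoc, hS (d + 1)] at this
    push_cast at this ⊢
    linarith
  obtain ⟨d₁, d₂, hlt, heq⟩ :=
    (finite_range_medn_of_eventually_const hX).exists_lt_map_eq_of_forall_mem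
      (f := fun d => medn X (L + d)) fun d => Set.mem_range_self _
  have h₁ := hmed d₁
  have h₂ := hmed d₂
  rw [heq] at h₁
  push_cast at h₁ h₂
  have hd : (d₁ : ℝ) < d₂ := by exact_mod_cast hlt
  have hmed_eq : medn X (L + d₂) - X L = 0 := by
    have : ((d₂ : ℝ) - d₁) * (medn X (L + d₂) - X L) = 0 := by linarith
    exact (mul_eq_zero.1 this).resolve_left (by linarith)
  rw [hmed_eq, mul_zero] at h₂
  linarith

theorem exists_eq_of_two_le_count (h : IsMnM a b c X) (hab : a ≠ b) (hac : a ≠ c) (hbc : b ≠ c)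
    {n : ℕ} (hn : 3 ≤ n) {M : ℝ} (hcount : 2 ≤ (firstTerms X n).count M) :
    ∃ l, 4 ≤ l ∧ l ≤ n ∧ X l = M := by
  by_contra! hne
  have hsplit : firstTerms X n = [a, b, c] ++ (List.range' 4 (n - 3)).map X := by
    obtain ⟨m, rfl⟩ : ∃ m, n = m + 3 := ⟨n - 3, by omega⟩
    rw [firstTerms, show m + 3 = 3 + m by omega, ← List.range'_append (step := 1)]
    simp [List.range'_succ, h.1, h.2.1, h.2.2.1]
  have htail : ((List.range' 4 (n - 3)).map X).count M = 0 := by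
    simp only [List.count_eq_zero, List.mem_map, List.mem_range'_1, not_exists, not_and]
    intro j hj
    exact hne j hj.1 (by omega)
  rw [hsplit, List.count_append, htail] at hcount
  simp only [List.count_cons, List.count_nil, beq_iff_eq] at hcount
  split_ifs at hcount <;> simp_all

end IsMnM

theorem eventual_value_appears_earlier_general (x : ℝ) (hx0 : 0 < x) (hx1 : x < 1)
    (X : ℕ → ℝ) (h : IsMnM 0 x 1 X) (L : ℕ) (hL : 4 < L)
    (hLeast : IsLeast {k | ∀ n, k < n → X n = X k} L)
    (M : ℝ)
    (hval : X L = M) :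
    ∃ l, 4 ≤ l ∧ l < L ∧ X l = M := by
  subst hval
  have hconst : ∀ n, L ≤ n → X n = X L := fun n hn =>
    hn.eq_or_lt.elim (fun hLn => hLn ▸ rfl) (hLeast.1 n)
  have hprev := apply_pred_ne_of_isLeast hLeast (by omega)
  obtain ⟨k, rfl⟩ : ∃ k, L = k + 2 := ⟨L - 2, by omega⟩
  have hS := h.sum_Icc_eq_mul_of_eventually_const (by omega) hconst
  have hm₁ : medn X (k + 1) = X (k + 2) := h.medn_eq_of_sum_Icc_succ (by omega) (by
    rw [hS]; push_cast; ring)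
  have hm₀ : medn X k = X (k + 2) := h.medn_eq_of_sum_Icc_succ (by omega) (by
    rw [Finset.sum_Icc_succ_top (by omega)] at hS; push_cast at hS; linarith)
  have hcount := two_le_count_of_med_append_eq hm₀ (firstTerms_succ X k ▸ hm₁) hprev
  obtain ⟨l, hl4, hlk, hl⟩ :=
    h.exists_eq_of_two_le_count hx0.ne (by norm_num) hx1.ne (by omega) hcount
  exact ⟨l, hl4, by omega, hl⟩

theorem eventual_value_appears_earlier (x : ℝ) (hx0 : 0 < x) (hx1 : x < 1)
    (X : ℕ → ℝ) (h : IsMnM 0 x 1 X) (L : ℕ) (hL : 4 < L)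
    (hLeast : IsLeast {k | ∀ n, k < n → X n = X k} L)
    (M : ℝ) (hM : Filter.Tendsto (medn X) Filter.atTop (nhds M))
    (hval : X L = M) :
    ∃ l, 4 ≤ l ∧ l < L ∧ X l = M :=
  eventual_value_appears_earlier_general x hx0 hx1 X h L hL hLeast M hval
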